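/- arXiv:math/0701640 — 4 statements merged into one kernel-verified Lean document; each statement's English description precedes it below -/
import Mathlib

section
/- Let (A_n)_{n∈ℕ} be a sequence of subsets of ℝ and let Â ⊆ *ℝ be the internal set it determines. If Â is nonempty and bounded above in *ℝ (i.e. there is b ∈ *ℝ with x ≤ b for all x ∈ Â), then Â has a least upper bound in *ℝ. -/
open Filter Germ

/-- The internal subset of the hyperreals `*ℝ = ℝ^ℕ/𝒰` determined by a sequence
`A : ℕ → Set ℝ` of subsets of `ℝ`:
`Â = { ⟨x_n⟩ : {n : x_n ∈ A_n} ∈ 𝒰 }`. -/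
def internalSet (A : ℕ → Set ℝ) : Set Hyperreal :=
  {x : Hyperreal | ∃ f : ℕ → ℝ, x = Hyperreal.ofSeq f ∧ ∀ᶠ n in (hyperfilter ℕ : Filter ℕ), f n ∈ A n}

/-- Every nonempty internal subset of `*ℝ` which is bounded above has a least
upper bound in `*ℝ`. -/
theorem internalSet_exists_isLUB (A : ℕ → Set ℝ)
    (hne : (internalSet A).Nonempty)
    (hbd : ∃ b : Hyperreal, ∀ x ∈ internalSet A, x ≤ b) :
    ∃ z : Hyperreal, IsLUB (internalSet A) z := by
  classical
  obtain ⟨x₀, f₀, hx₀, hf₀⟩ := hne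
  obtain ⟨b, hb⟩ := hbd
  obtain ⟨g, rfl⟩ : ∃ g : ℕ → ℝ, b = Hyperreal.ofSeq g := ⟨_, (Quotient.exists_rep b).choose_spec.symm⟩
  -- a.e. A n is nonempty
  have hNe : ∀ᶠ n in (hyperfilter ℕ : Filter ℕ), (A n).Nonempty :=
    hf₀.mono fun n hn => ⟨f₀ n, hn⟩
  -- a.e. A n is bounded above
  have hBdd : ∀ᶠ n in (hyperfilter ℕ : Filter ℕ), BddAbove (A n) := by
    by_contra h
    have hS : ∀ᶠ n in (hyperfilter ℕ : Filter ℕ), ¬ BddAbove (A n) :=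
      Ultrafilter.eventually_not.2 h
    set x : ℕ → ℝ := fun n => if h : ∃ a, a ∈ A n ∧ g n < a then h.choose else 0 with hx
    have hmem : ∀ᶠ n in (hyperfilter ℕ : Filter ℕ), x n ∈ A n ∧ g n < x n := by
      refine hS.mono fun n hn => ?_
      have hex : ∃ a, a ∈ A n ∧ g n < a := by
        obtain ⟨a, ha, hga⟩ := not_bddAbove_iff.1 hn (g n)
        exact ⟨a, ha, hga⟩
      simpa [hx, dif_pos hex] using hex.choose_spec
    have hxin : Hyperreal.ofSeq x ∈ internalSet A :=
      ⟨x, rfl, hmem.mono fun n hn => hn.1⟩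
    have hle : ∀ᶠ n in (hyperfilter ℕ : Filter ℕ), x n ≤ g n :=
      Germ.coe_le.1 (hb _ hxin)
    obtain ⟨n, hn1, hn2⟩ := (hmem.and hle).exists
    exact absurd hn2 (not_le.2 hn1.2)
  set s : ℕ → ℝ := fun n => if (A n).Nonempty ∧ BddAbove (A n) then sSup (A n) else 0 with hs
  refine ⟨Hyperreal.ofSeq s, ?_, ?_⟩
  · rintro x ⟨f, rfl, hf⟩
    refine Germ.coe_le.2 ?_
    filter_upwards [hf, hNe, hBdd] with n hfn hne hbd
    have hsn : s n = sSup (A n) := by simp [hs, hne, hbd]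
    rw [hsn]
    exact le_csSup hbd hfn
  · intro y hy
    obtain ⟨u, rfl⟩ : ∃ u : ℕ → ℝ, y = Hyperreal.ofSeq u :=
      ⟨_, (Quotient.exists_rep y).choose_spec.symm⟩
    by_contra hlt
    have hult : ∀ᶠ n in (hyperfilter ℕ : Filter ℕ), u n < s n := by
      have : ¬ ∀ᶠ n in (hyperfilter ℕ : Filter ℕ), s n ≤ u n :=
        fun h => hlt (Germ.coe_le.2 h)
      have := Ultrafilter.eventually_not.2 this
      exact this.mono fun n hn => not_le.1 hn
    set x : ℕ → ℝ := fun n => if h : ∃ a, a ∈ A n ∧ u n < a then h.choose else 0 with hx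
    have hmem : ∀ᶠ n in (hyperfilter ℕ : Filter ℕ), x n ∈ A n ∧ u n < x n := by
      filter_upwards [hult, hNe, hBdd] with n hn hne hbd
      have hex : ∃ a, a ∈ A n ∧ u n < a := by
        have hsn : s n = sSup (A n) := by simp [hs, hne, hbd]
        have hn' : u n < sSup (A n) := hsn ▸ hn
        obtain ⟨a, ha, hua⟩ := exists_lt_of_lt_csSup hne hn'
        exact ⟨a, ha, hua⟩
      simpa [hx, dif_pos hex] using hex.choose_spec
    have hxin : Hyperreal.ofSeq x ∈ internalSet A :=
      ⟨x, rfl, hmem.mono fun n hn => hn.1⟩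
    have hle : ∀ᶠ n in (hyperfilter ℕ : Filter ℕ), x n ≤ u n :=
      Germ.coe_le.1 (hy hxin)
    obtain ⟨n, hn1, hn2⟩ := (hmem.and hle).exists
    exact absurd hn2 (not_le.2 hn1.2)
end

section
/- (ℵ₁-saturation.) For each m ∈ ℕ let Â_m ⊆ *ℝ be the internal set determined by a sequence (A_{m,n})_{n∈ℕ} of subsets of ℝ. If Â_{m+1} ⊆ Â_m and Â_m ≠ ∅ for every m ∈ ℕ, then ⋂_{m∈ℕ} Â_m ≠ ∅. -/
open Filter Germ

/-- ℵ₁-saturation: a countable decreasing sequence of nonempty internal subsets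
of `*ℝ` has nonempty intersection. -/
theorem aleph1_saturation (A : ℕ → ℕ → Set ℝ)
    (hdec : ∀ m : ℕ, internalSet (A (m + 1)) ⊆ internalSet (A m))
    (hne : ∀ m : ℕ, (internalSet (A m)).Nonempty) :
    (⋂ m : ℕ, internalSet (A m)) ≠ ∅ := by
  classical
  -- the "truncated intersections"
  set B : ℕ → ℕ → Set ℝ := fun m n => ⋂ k ∈ Finset.range (m + 1), A k n with hB
  have hanti : Antitone (fun m => internalSet (A m)) :=
    antitone_nat_of_succ_le hdec
  have hBanti : ∀ {m m' : ℕ}, m ≤ m' → ∀ n, B m' n ⊆ B m n := by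
    intro m m' hmm n x hx
    simp only [hB, Set.mem_iInter, Finset.mem_range] at hx ⊢
    intro k hk
    exact hx k (lt_of_lt_of_le hk (by omega))
  have hBsub : ∀ m n, B m n ⊆ A m n := by
    intro m n x hx
    simp only [hB, Set.mem_iInter, Finset.mem_range] at hx
    exact hx m (Nat.lt_succ_self m)
  -- each truncated intersection is a.e. nonempty
  have key : ∀ m : ℕ, ∀ᶠ n in (hyperfilter ℕ : Filter ℕ), (B m n).Nonempty := by
    intro m
    obtain ⟨x, hx⟩ := hne m
    obtain ⟨f, hf, hf'⟩ := hx
    have hall : ∀ k ∈ Finset.range (m + 1), ∀ᶠ n in (hyperfilter ℕ : Filter ℕ), f n ∈ A k n := by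
      intro k hk
      have hk' : k ≤ m := Nat.lt_succ_iff.mp (Finset.mem_range.mp hk)
      have hxk : x ∈ internalSet (A k) := hanti hk' ⟨f, hf, hf'⟩
      obtain ⟨g, hg, hg'⟩ := hxk
      have heq : f =ᶠ[(hyperfilter ℕ : Filter ℕ)] g := by
        have : (↑f : Germ (hyperfilter ℕ : Filter ℕ) ℝ) = ↑g := by
          rw [hf] at hg; exact hg
        exact Germ.coe_eq.mp this
      filter_upwards [hg', heq] with n h1 h2
      rw [h2]; exact h1
    have hev := (Filter.eventually_all_finset (Finset.range (m + 1))).mpr hall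
    filter_upwards [hev] with n hn
    exact ⟨f n, by simp only [hB, Set.mem_iInter]; intro k hk; exact hn k hk⟩
  -- the diagonal sequence
  set M : ℕ → ℕ := fun n => Nat.findGreatest (fun m => (B m n).Nonempty) n with hM
  set g : ℕ → ℝ := fun n =>
    if h : (B (M n) n).Nonempty then h.some else 0 with hg
  have hgB : ∀ m : ℕ, ∀ᶠ n in (hyperfilter ℕ : Filter ℕ), g n ∈ B m n := by
    intro m
    have h1 : ∀ᶠ n in (hyperfilter ℕ : Filter ℕ), m ≤ n := by
      have hc : ∀ᶠ n in (cofinite : Filter ℕ), m ≤ n := by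
        rw [Nat.cofinite_eq_atTop]; exact eventually_ge_atTop m
      exact hc.filter_mono (hyperfilter_le_cofinite)
    filter_upwards [key m, h1] with n hBm hmn
    have hMm : m ≤ M n := Nat.le_findGreatest hmn hBm
    have hMne : (B (M n) n).Nonempty := Nat.findGreatest_spec (P := fun m => (B m n).Nonempty) hmn hBm
    have : g n ∈ B (M n) n := by
      rw [hg]; simp only [dif_pos hMne]; exact hMne.some_mem
    exact hBanti hMm n this
  apply Set.nonempty_iff_ne_empty.mp
  refine ⟨Hyperreal.ofSeq g, Set.mem_iInter.mpr fun m => ⟨g, rfl, ?_⟩⟩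
  filter_upwards [hgB m] with n hn
  exact hBsub m n hn
end

section
/- Let g : ℝ → ℝ, let a < b be reals, let *g : *ℝ → *ℝ be the pointwise extension *g(⟨x_n⟩) = ⟨g(x_n)⟩, and let *[a,b] = {x ∈ *ℝ : a ≤ x ≤ b}. Then *g is S-continuous on *[a,b] (i.e. x ≈ y implies *g(x) ≈ *g(y) for all x, y ∈ *[a,b]) if and only if g is continuous on [a,b]; and in that case *g(τ) is finite and st(*g(τ)) = g(st(τ)) for every τ ∈ *[a,b]. -/
open Filter Germ

/-- The pointwise nonstandard extension `*g : *ℝ → *ℝ` of `g : ℝ → ℝ`, given by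
`*g(⟨x_n⟩) = ⟨g(x_n)⟩`. -/
noncomputable def starFun (g : ℝ → ℝ) : Hyperreal → Hyperreal :=
  fun x => Germ.map g x

/-- The nonstandard interval `*[a,b] = {x ∈ *ℝ : a ≤ x ≤ b}`. -/
def starIcc (a b : ℝ) : Set Hyperreal :=
  {x : Hyperreal | (a : Hyperreal) ≤ x ∧ x ≤ (b : Hyperreal)}

/-- `F` is S-continuous on `Y` if infinitely close arguments in `Y` have
infinitely close values. -/
def SContinuousOn (F : Hyperreal → Hyperreal) (Y : Set Hyperreal) : Prop :=
  ∀ x ∈ Y, ∀ y ∈ Y, Hyperreal.Infinitesimal (x - y) → Hyperreal.Infinitesimal (F x - F y)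

theorem ofSeq_mem_starIcc {a b : ℝ} {f : ℕ → ℝ} :
    Hyperreal.ofSeq f ∈ starIcc a b ↔
      (∀ᶠ n in hyperfilter ℕ, a ≤ f n) ∧ ∀ᶠ n in hyperfilter ℕ, f n ≤ b := by
  constructor
  · rintro ⟨h1, h2⟩
    exact ⟨Germ.coe_le.1 h1, Germ.coe_le.1 h2⟩
  · rintro ⟨h1, h2⟩
    exact ⟨Germ.coe_le.2 h1, Germ.coe_le.2 h2⟩

theorem sContinuousOn_of_continuousOn {g : ℝ → ℝ} {a b : ℝ}
    (hg : ContinuousOn g (Set.Icc a b)) : SContinuousOn (starFun g) (starIcc a b) := by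
  have hu : UniformContinuousOn g (Set.Icc a b) :=
    isCompact_Icc.uniformContinuousOn_of_continuous hg
  rw [Metric.uniformContinuousOn_iff] at hu
  intro x hx y hy hxy
  obtain ⟨f, rfl⟩ := Hyperreal.ofSeq_surjective x
  obtain ⟨f', rfl⟩ := Hyperreal.ofSeq_surjective y
  rw [ofSeq_mem_starIcc] at hx hy
  rw [Hyperreal.infinitesimal_def] at hxy ⊢
  intro ε hε
  obtain ⟨δ, hδ, hδε⟩ := hu ε hε
  obtain ⟨h1, h2⟩ := hxy δ hδ
  have hsub : Hyperreal.ofSeq f - Hyperreal.ofSeq f' =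
      Hyperreal.ofSeq (fun n => f n - f' n) := rfl
  rw [hsub] at h1 h2
  have h1' : ∀ᶠ n in hyperfilter ℕ, -δ < f n - f' n := by
    have := Hyperreal.ofSeq_lt_ofSeq.1 (show Hyperreal.ofSeq (fun _ => -δ) <
      Hyperreal.ofSeq (fun n => f n - f' n) from h1)
    exact this
  have h2' : ∀ᶠ n in hyperfilter ℕ, f n - f' n < δ := by
    have := Hyperreal.ofSeq_lt_ofSeq.1 (show Hyperreal.ofSeq (fun n => f n - f' n) <
      Hyperreal.ofSeq (fun _ => δ) from h2)
    exact this
  have key : ∀ᶠ n in hyperfilter ℕ, -ε < g (f n) - g (f' n) ∧ g (f n) - g (f' n) < ε := by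
    filter_upwards [h1', h2', hx.1, hx.2, hy.1, hy.2] with n k1 k2 k3 k4 k5 k6
    have hd : dist (f n) (f' n) < δ := by
      rw [Real.dist_eq, abs_sub_lt_iff]
      constructor <;> linarith
    have := hδε (f n) ⟨k3, k4⟩ (f' n) ⟨k5, k6⟩ hd
    rw [Real.dist_eq, abs_sub_lt_iff] at this
    constructor <;> linarith
  have hmap : starFun g (Hyperreal.ofSeq f) - starFun g (Hyperreal.ofSeq f') =
      Hyperreal.ofSeq (fun n => g (f n) - g (f' n)) := rfl
  rw [hmap]
  constructor
  · exact Hyperreal.ofSeq_lt_ofSeq.2 (key.mono fun n hn => hn.1)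
  · exact Hyperreal.ofSeq_lt_ofSeq.2 (key.mono fun n hn => hn.2)

/-- `*g` is S-continuous on `*[a,b]` iff `g` is continuous on `[a,b]`; and in that
case `*g(τ)` is finite with `st(*g(τ)) = g(st(τ))` for every `τ ∈ *[a,b]`. -/
theorem sContinuousOn_iff_continuousOn (g : ℝ → ℝ) (a b : ℝ) (hab : a < b) :
    (SContinuousOn (starFun g) (starIcc a b) ↔ ContinuousOn g (Set.Icc a b)) ∧
      (ContinuousOn g (Set.Icc a b) →
        ∀ τ ∈ starIcc a b,
          ¬ (starFun g τ).Infinite ∧ Hyperreal.st (starFun g τ) = g (Hyperreal.st τ)) := by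
  constructor
  · constructor
    · -- S-continuous → continuous
      intro h
      by_contra hc
      rw [ContinuousOn] at hc
      push_neg at hc
      obtain ⟨c, hc1, hc2⟩ := hc
      rw [Metric.continuousWithinAt_iff] at hc2
      push_neg at hc2
      obtain ⟨ε, hε, hδ⟩ := hc2
      choose x hx1 hx2 hx3 using fun n : ℕ => hδ (1 / (n + 1)) (by positivity)
      -- x n → c
      have htend : Tendsto x atTop (nhds c) := by
        rw [tendsto_iff_dist_tendsto_zero]
        exact squeeze_zero (fun n => dist_nonneg) (fun n => (hx2 n).le)
          tendsto_one_div_add_atTop_nhds_zero_nat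
      have hst : Hyperreal.IsSt (Hyperreal.ofSeq x) c := Hyperreal.isSt_of_tendsto htend
      have hmem : Hyperreal.ofSeq x ∈ starIcc a b :=
        ofSeq_mem_starIcc.2 ⟨Eventually.of_forall fun n => (hx1 n).1,
          Eventually.of_forall fun n => (hx1 n).2⟩
      have hcmem : (c : Hyperreal) ∈ starIcc a b :=
        ⟨Hyperreal.coe_le_coe.2 hc1.1, Hyperreal.coe_le_coe.2 hc1.2⟩
      have hinf : Hyperreal.Infinitesimal (Hyperreal.ofSeq x - c) := by
        have := hst.sub (Hyperreal.isSt_refl_real c)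
        rwa [sub_self] at this
      have := h _ hmem _ hcmem hinf
      rw [Hyperreal.infinitesimal_def] at this
      obtain ⟨l1, l2⟩ := this ε hε
      have hmap : starFun g (Hyperreal.ofSeq x) - starFun g (c : Hyperreal) =
          Hyperreal.ofSeq (fun n => g (x n) - g c) := rfl
      rw [hmap] at l1 l2
      have l1' : ∀ᶠ n in hyperfilter ℕ, -ε < g (x n) - g c :=
        Hyperreal.ofSeq_lt_ofSeq.1 (show Hyperreal.ofSeq (fun _ => -ε) <
          Hyperreal.ofSeq (fun n => g (x n) - g c) from l1)
      have l2' : ∀ᶠ n in hyperfilter ℕ, g (x n) - g c < ε :=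
        Hyperreal.ofSeq_lt_ofSeq.1 (show Hyperreal.ofSeq (fun n => g (x n) - g c) <
          Hyperreal.ofSeq (fun _ => ε) from l2)
      obtain ⟨n, hn1, hn2⟩ := (l1'.and l2').exists
      have h3 := hx3 n
      rw [Real.dist_eq] at h3
      have habs : |g (x n) - g c| < ε := abs_sub_lt_iff.2 ⟨by linarith, by linarith⟩
      linarith
    · exact sContinuousOn_of_continuousOn
  · -- second part
    intro hg τ hτ
    have hscont := sContinuousOn_of_continuousOn hg
    have hni : ¬ τ.Infinite := by
      rw [Hyperreal.not_infinite_iff_exist_lt_gt]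
      exact ⟨a - 1, b + 1, lt_of_lt_of_le (Hyperreal.coe_lt_coe.2 (by linarith)) hτ.1,
        lt_of_le_of_lt hτ.2 (Hyperreal.coe_lt_coe.2 (by linarith))⟩
    have hst : Hyperreal.IsSt τ (Hyperreal.st τ) := Hyperreal.isSt_st' hni
    set r := Hyperreal.st τ with hr
    have hrmem : r ∈ Set.Icc a b :=
      ⟨(Hyperreal.isSt_refl_real a).le hst hτ.1, hst.le (Hyperreal.isSt_refl_real b) hτ.2⟩
    have hrmem' : (r : Hyperreal) ∈ starIcc a b :=
      ⟨Hyperreal.coe_le_coe.2 hrmem.1, Hyperreal.coe_le_coe.2 hrmem.2⟩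
    have hinf : Hyperreal.Infinitesimal (τ - r) := by
      have := hst.sub (Hyperreal.isSt_refl_real r)
      rwa [sub_self] at this
    have key := hscont τ hτ _ hrmem' hinf
    have hmap : starFun g ((r : ℝ) : Hyperreal) = ((g r : ℝ) : Hyperreal) := rfl
    have hfin : Hyperreal.IsSt (starFun g τ) (g r) := by
      have key' : Hyperreal.IsSt (starFun g τ - starFun g ((r : ℝ) : Hyperreal)) 0 := key
      have := key'.add (Hyperreal.isSt_refl_real (g r))
      rw [zero_add] at this
      rw [hmap] at this
      convert this using 1
      ring
    exact ⟨hfin.not_infinite, hfin.st_eq⟩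
end

section
/- (Frostman's lemma.) Let A be a compact subset of [0,1] and β ∈ (0,1). Then μH[β](A) > 0 if and only if there exist a nonzero finite Borel measure μ on ℝ with μ(ℝ ∖ A) = 0 and a constant C > 0 such that μ(B) ≤ C·(diam B)^β for every interval B ⊆ [0,1]. -/
open MeasureTheory Metric Set Filter
open scoped NNReal ENNReal Classical Topology

namespace FrostmanAux

noncomputable section

/-- dyadic interval of level `j`, index `k` -/
def leaf (j k : ℕ) : Set ℝ := Set.Ico ((k : ℝ) / 2 ^ j) (((k : ℝ) + 1) / 2 ^ j)

def cap (β : ℝ) (j : ℕ) : ℝ≥0 := ((2 : ℝ≥0) ^ j)⁻¹ ^ β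

lemma cap_pos (β : ℝ) (j : ℕ) : 0 < cap β j :=
  NNReal.rpow_pos (by positivity)

lemma cap_zero (β : ℝ) : cap β 0 = 1 := by
  simp [cap, NNReal.one_rpow]

variable (A : Set ℝ) (β : ℝ)

def w0 (n i : ℕ) : ℝ≥0 := if (A ∩ leaf n i).Nonempty then cap β n else 0

lemma w0_le (n i : ℕ) : w0 A β n i ≤ cap β n := by
  unfold w0; split <;> simp [le_refl]

lemma w0_ne_zero_iff (n i : ℕ) : w0 A β n i ≠ 0 ↔ (A ∩ leaf n i).Nonempty := by
  unfold w0; split <;> simp_all [(cap_pos β n).ne']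

def pt (n i : ℕ) : ℝ := if h : (A ∩ leaf n i).Nonempty then h.choose else 0

lemma pt_mem (n i : ℕ) (h : (A ∩ leaf n i).Nonempty) : pt A n i ∈ A ∩ leaf n i := by
  unfold pt; rw [dif_pos h]; exact h.choose_spec

lemma pt_mem_Icc (hA1 : A ⊆ Set.Icc 0 1) (n i : ℕ) : pt A n i ∈ Set.Icc (0:ℝ) 1 := by
  unfold pt; split
  · next h => exact hA1 h.choose_spec.1
  · exact ⟨le_refl 0, zero_le_one⟩

lemma mem_leaf_iff (j k : ℕ) (x : ℝ) (hx : 0 ≤ x) :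
    x ∈ leaf j k ↔ ⌊x * 2 ^ j⌋₊ = k := by
  have h2 : (0:ℝ) < 2 ^ j := by positivity
  rw [leaf, Set.mem_Ico, div_le_iff₀ h2, lt_div_iff₀ h2, Nat.floor_eq_iff (by positivity)]

lemma nonempty_lt (hA1 : A ⊆ Set.Icc 0 1) {n i : ℕ} (h : (A ∩ leaf n i).Nonempty) :
    i < 2 ^ (n + 1) := by
  obtain ⟨x, hxA, hx⟩ := h
  have hx0 : (0:ℝ) ≤ x := (hA1 hxA).1
  have hx1 : x ≤ 1 := (hA1 hxA).2
  have h2 : (0:ℝ) < 2 ^ n := by positivity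
  have : (i:ℝ) ≤ x * 2 ^ n := by
    have := hx.1; rwa [div_le_iff₀ h2] at this
  have hfin : (i:ℝ) < 2 ^ (n+1) := by
    have : (i:ℝ) ≤ 2 ^ n := le_trans this (by nlinarith)
    have h2n : (2:ℝ) ^ n < 2 ^ (n+1) := by
      rw [pow_succ]; nlinarith
    linarith
  have : ((i:ℕ):ℝ) < ((2 ^ (n+1) : ℕ) : ℝ) := by push_cast; exact hfin
  exact_mod_cast this

def blockSum (n : ℕ) (w : ℕ → ℝ≥0) (j k : ℕ) : ℝ≥0 :=
  ∑ i ∈ (Finset.range (2 ^ (n + 1))).filter fun i => i / 2 ^ (n - j) = k, w i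

def W (n : ℕ) : ℕ → ℕ → ℝ≥0
  | 0 => w0 A β n
  | d + 1 => fun i =>
      W n d i * min 1 (cap β (n - (d + 1)) /
        blockSum n (W n d) (n - (d + 1)) (i / 2 ^ (d + 1)))

lemma div_pow_add (i a b : ℕ) : i / 2 ^ a / 2 ^ b = i / 2 ^ (a + b) := by
  rw [Nat.div_div_eq_div_mul, pow_add]

lemma W_le_w0 (n d i : ℕ) : W A β n d i ≤ w0 A β n i := by
  induction d with
  | zero => exact le_refl _
  | succ d ih =>
      exact le_trans (mul_le_of_le_one_right (zero_le) (min_le_left _ _)) ih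

lemma blockSum_level_n (n : ℕ) (w : ℕ → ℝ≥0) (k : ℕ) :
    blockSum n w n k = if k < 2 ^ (n + 1) then w k else 0 := by
  unfold blockSum
  simp only [Nat.sub_self, pow_zero, Nat.div_one]
  rw [Finset.sum_filter]
  rw [Finset.sum_ite_eq' (Finset.range (2 ^ (n + 1))) k w]
  simp [Finset.mem_range]

lemma le_blockSum (n d j i : ℕ) (hi : i < 2 ^ (n + 1)) :
    W A β n d i ≤ blockSum n (W A β n d) j (i / 2 ^ (n - j)) := by
  refine Finset.single_le_sum (fun i _ => zero_le) ?_
  simp [Finset.mem_filter, Finset.mem_range, hi]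

lemma blockSum_succ (n d j k : ℕ) (hd : d + 1 ≤ n) (h1 : n - (d + 1) ≤ j) (h2 : j ≤ n) :
    blockSum n (W A β n (d + 1)) j k
      = min 1 (cap β (n - (d + 1)) /
          blockSum n (W A β n d) (n - (d + 1)) (k / 2 ^ (j - (n - (d + 1)))))
        * blockSum n (W A β n d) j k := by
  have hnn : n - (n - (d + 1)) = d + 1 := by omega
  unfold blockSum
  rw [Finset.mul_sum]
  refine Finset.sum_congr rfl fun i hi => ?_
  rw [Finset.mem_filter] at hi
  have hk : k / 2 ^ (j - (n - (d + 1))) = i / 2 ^ (d + 1) := by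
    rw [← hi.2, div_pow_add]
    have he : n - j + (j - (n - (d + 1))) = d + 1 := by omega
    rw [he]
  show W A β n (d+1) i = _
  rw [W, hk, mul_comm]
  simp only [blockSum, hnn]

lemma blockSum_le (n : ℕ) :
    ∀ d, d ≤ n → ∀ j, n - d ≤ j → j ≤ n → ∀ k,
      blockSum n (W A β n d) j k ≤ cap β j := by
  intro d
  induction d with
  | zero =>
      intro _ j hj1 hj2 k
      have hj : n = j := by omega
      subst hj
      rw [blockSum_level_n]
      split
      · exact w0_le A β n k
      · exact zero_le
  | succ d ih =>
      intro hd j hj1 hj2 k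
      rw [blockSum_succ A β n d j k hd hj1 hj2]
      by_cases hj : n - d ≤ j
      · exact le_trans (mul_le_of_le_one_left (zero_le) (min_le_left _ _))
          (ih (by omega) j hj hj2 k)
      · have hj' : j = n - (d + 1) := by omega
        subst hj'
        have hkk : k / 2 ^ (n - (d+1) - (n - (d + 1))) = k := by simp
        rw [hkk]
        set S := blockSum n (W A β n d) (n - (d + 1)) k with hS
        rcases le_total S (cap β (n - (d + 1))) with h | h
        · exact le_trans (mul_le_of_le_one_left (zero_le) (min_le_left _ _)) h
        · have hSne : S ≠ 0 := by
            intro h0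
            rw [h0] at h
            exact (cap_pos β _).ne' (le_antisymm h (zero_le))
          calc min 1 (cap β (n - (d+1)) / S) * S
              ≤ (cap β (n - (d+1)) / S) * S := mul_le_mul_left (min_le_right _ _) _
            _ = cap β (n - (d+1)) := div_mul_cancel₀ _ hSne

lemma W_ne_zero (hA1 : A ⊆ Set.Icc 0 1) (n : ℕ) :
    ∀ d, d ≤ n → ∀ i, w0 A β n i ≠ 0 → W A β n d i ≠ 0 := by
  intro d
  induction d with
  | zero => intro _ i h; exact h
  | succ d ih =>
      intro hd i h
      have hne : (A ∩ leaf n i).Nonempty := (w0_ne_zero_iff A β n i).1 h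
      have hi : i < 2 ^ (n + 1) := nonempty_lt A hA1 hne
      have hW : W A β n d i ≠ 0 := ih (by omega) i h
      have hidx : n - (n - (d + 1)) = d + 1 := by omega
      have hS : blockSum n (W A β n d) (n - (d + 1)) (i / 2 ^ (d + 1)) ≠ 0 := by
        intro h0
        apply hW
        have hle := le_blockSum A β n d (n - (d + 1)) i hi
        rw [hidx, h0] at hle
        exact le_antisymm hle (zero_le)
      show W A β n d i * _ ≠ 0
      refine mul_ne_zero hW (ne_of_gt (lt_min one_pos ?_))
      exact pos_iff_ne_zero.2 (div_ne_zero (cap_pos β _).ne' hS)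

lemma saturation (hA1 : A ⊆ Set.Icc 0 1) (n : ℕ) :
    ∀ d, d ≤ n → ∀ i, w0 A β n i ≠ 0 →
      ∃ j, n - d ≤ j ∧ j ≤ n ∧
        blockSum n (W A β n d) j (i / 2 ^ (n - j)) = cap β j := by
  intro d
  induction d with
  | zero =>
      intro _ i hi
      refine ⟨n, by omega, le_refl n, ?_⟩
      have h1 : i / 2 ^ (n - n) = i := by simp
      rw [h1, blockSum_level_n,
        if_pos (nonempty_lt A hA1 ((w0_ne_zero_iff A β n i).1 hi))]
      show w0 A β n i = cap β n
      rw [w0, if_pos ((w0_ne_zero_iff A β n i).1 hi)]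
  | succ d ih =>
      intro hd i hi
      obtain ⟨j, hj1, hj2, hsat⟩ := ih (by omega) i hi
      have hiLt : i < 2 ^ (n + 1) := nonempty_lt A hA1 ((w0_ne_zero_iff A β n i).1 hi)
      have hidx : n - (n - (d + 1)) = d + 1 := by omega
      set S := blockSum n (W A β n d) (n - (d + 1)) (i / 2 ^ (d + 1)) with hSdef
      have hSne : S ≠ 0 := by
        intro h0
        have hW : W A β n d i ≠ 0 := W_ne_zero A β hA1 n d (by omega) i hi
        apply hW
        have hle := le_blockSum A β n d (n - (d + 1)) i hiLt
        rw [hidx, ← hSdef, h0] at hle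
        exact le_antisymm hle (zero_le)
      have hfact : blockSum n (W A β n (d + 1)) j (i / 2 ^ (n - j))
          = min 1 (cap β (n - (d + 1)) / S) * cap β j := by
        rw [blockSum_succ A β n d j _ hd (by omega) hj2, hsat]
        congr 3
        rw [div_pow_add]
        have he : n - j + (j - (n - (d + 1))) = d + 1 := by omega
        rw [he]
      rcases le_or_gt S (cap β (n - (d + 1))) with h | h
      · refine ⟨j, by omega, hj2, ?_⟩
        rw [hfact, min_eq_left, one_mul]
        rw [le_div_iff₀ (pos_iff_ne_zero.2 hSne), one_mul]
        exact h
      · refine ⟨n - (d + 1), le_refl _, by omega, ?_⟩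
        have hfact2 : blockSum n (W A β n (d + 1)) (n - (d + 1)) (i / 2 ^ (n - (n - (d + 1))))
            = min 1 (cap β (n - (d + 1)) / S) * S := by
          rw [blockSum_succ A β n d _ _ hd (le_refl _) (by omega)]
          rw [hidx]
          congr 2
          rw [Nat.sub_self, pow_zero, Nat.div_one]
        rw [hfact2, min_eq_right, div_mul_cancel₀ _ hSne]
        exact le_of_lt ((div_lt_one (pos_iff_ne_zero.2 hSne)).2 h)

def Tmass (n : ℕ) : ℝ≥0 := ∑ i ∈ Finset.range (2 ^ (n + 1)), W A β n n i

lemma sum_filter_le_Tmass (n : ℕ) (p : ℕ → Prop) :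
    ∑ i ∈ (Finset.range (2 ^ (n + 1))).filter p, W A β n n i ≤ Tmass A β n :=
  Finset.sum_le_sum_of_subset (Finset.filter_subset _ _)

lemma Tmass_le_two (n : ℕ) : Tmass A β n ≤ 2 := by
  have hfil : (Finset.range (2 ^ (n + 1))).filter (fun i => ¬ (i / 2 ^ (n - 0) = 0))
      = (Finset.range (2 ^ (n + 1))).filter (fun i => i / 2 ^ (n - 0) = 1) := by
    apply Finset.filter_congr
    intro i hi
    rw [Finset.mem_range] at hi
    have hlt : i / 2 ^ n < 2 := by
      apply Nat.div_lt_of_lt_mul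
      rw [← pow_succ]
      exact hi
    simp only [Nat.sub_zero]
    constructor
    · intro h
      interval_cases h1 : (i / 2 ^ n)
      · exact absurd rfl h
      · rfl
    · intro h; rw [h]; exact one_ne_zero
  have hsplit : Tmass A β n = blockSum n (W A β n n) 0 0 + blockSum n (W A β n n) 0 1 := by
    unfold Tmass blockSum
    rw [← Finset.sum_filter_add_sum_filter_not (Finset.range (2 ^ (n + 1)))
      (fun i => i / 2 ^ (n - 0) = 0), hfil]
  rw [hsplit]
  have b0 := blockSum_le A β n n (le_refl n) 0 (by omega) (by omega) 0
  have b1 := blockSum_le A β n n (le_refl n) 0 (by omega) (by omega) 1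
  calc blockSum n (W A β n n) 0 0 + blockSum n (W A β n n) 0 1
      ≤ cap β 0 + cap β 0 := add_le_add b0 b1
    _ = 2 := by rw [cap_zero]; norm_num

lemma ediam_leaf_rpow (hβ0 : 0 < β) (j k : ℕ) :
    EMetric.diam (leaf j k) ^ β = (cap β j : ℝ≥0∞) := by
  have h1 : ((k:ℝ)+1)/2^j - (k:ℝ)/2^j = ((2:ℝ)^j)⁻¹ := by
    field_simp
    ring
  rw [leaf, EMetric.diam, Real.ediam_Ico, h1]
  have h2 : ((2:ℝ)^j)⁻¹ = (((((2:ℝ≥0))^j)⁻¹ : ℝ≥0) : ℝ) := by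
    push_cast
    norm_num
  rw [h2, ENNReal.ofReal_coe_nnreal, ← ENNReal.coe_rpow_of_ne_zero (by positivity)]
  rfl

lemma mass_lb (hA1 : A ⊆ Set.Icc 0 1) (hβ0 : 0 < β) (c : ℝ≥0∞)
    (hc : ∀ t : ℕ → Set ℝ, A ⊆ (⋃ m, t m) → c ≤ ∑' m, EMetric.diam (t m) ^ β)
    (n : ℕ) : c ≤ (Tmass A β n : ℝ≥0∞) := by
  classical
  set J : Finset (ℕ × ℕ) :=
    ((Finset.range (n+1)) ×ˢ (Finset.range (2^(n+1)))).filter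
      (fun p => blockSum n (W A β n n) p.1 p.2 = cap β p.1 ∧
        ∀ j' < p.1, ¬ (blockSum n (W A β n n) j' (p.2 / 2 ^ (p.1 - j')) = cap β j')) with hJ
  set t : ℕ → Set ℝ := fun m =>
    if m.unpair ∈ J then leaf m.unpair.1 m.unpair.2 else ∅ with ht
  -- the blocks in J cover A
  have hcov : A ⊆ ⋃ m, t m := by
    intro x hx
    have hx0 : (0:ℝ) ≤ x := (hA1 hx).1
    have hx1 : x ≤ 1 := (hA1 hx).2
    set lx := ⌊x * 2 ^ n⌋₊ with hlx
    have hxleaf : x ∈ leaf n lx := (mem_leaf_iff n lx x hx0).2 rfl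
    have hw0 : w0 A β n lx ≠ 0 := (w0_ne_zero_iff A β n lx).2 ⟨x, hx, hxleaf⟩
    have hlxle : lx ≤ 2 ^ n := by
      have h1 : x * 2 ^ n ≤ ((2 ^ n : ℕ) : ℝ) := by
        push_cast
        nlinarith [pow_pos (by norm_num : (0:ℝ) < 2) n]
      calc lx ≤ ⌊((2 ^ n : ℕ) : ℝ)⌋₊ := Nat.floor_mono h1
        _ = 2 ^ n := Nat.floor_natCast _
    obtain ⟨j, _, hj2, hsat⟩ := saturation A β hA1 n n (le_refl n) lx hw0
    have hP : ∃ j, j ≤ n ∧ blockSum n (W A β n n) j (lx / 2 ^ (n - j)) = cap β j :=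
      ⟨j, hj2, hsat⟩
    have hj0n : Nat.find hP ≤ n := (Nat.find_spec hP).1
    have hsat0 := (Nat.find_spec hP).2
    set j0 := Nat.find hP with hj0
    set k0 := lx / 2 ^ (n - j0) with hk0
    have hk0lt : k0 < 2 ^ (n + 1) := by
      calc k0 ≤ lx := Nat.div_le_self _ _
        _ ≤ 2 ^ n := hlxle
        _ < 2 ^ (n + 1) := Nat.pow_lt_pow_succ one_lt_two
    have hmem : (j0, k0) ∈ J := by
      rw [hJ, Finset.mem_filter, Finset.mem_product, Finset.mem_range, Finset.mem_range]
      refine ⟨⟨Nat.lt_succ_of_le hj0n, hk0lt⟩, hsat0, ?_⟩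
      intro j' hj' hsat'
      refine Nat.find_min hP hj' ⟨le_trans hj'.le hj0n, ?_⟩
      have hdiv : k0 / 2 ^ (j0 - j') = lx / 2 ^ (n - j') := by
        rw [hk0, div_pow_add]
        have he : n - j0 + (j0 - j') = n - j' := by omega
        rw [he]
      rwa [hdiv] at hsat'
    have hxblock : x ∈ leaf j0 k0 := by
      refine (mem_leaf_iff j0 k0 x hx0).2 ?_
      have hcast : x * 2 ^ n / ((2 ^ (n - j0) : ℕ) : ℝ) = x * 2 ^ j0 := by
        push_cast
        rw [div_eq_iff (by positivity), mul_assoc, ← pow_add]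
        have he : j0 + (n - j0) = n := by omega
        rw [he]
      rw [← hcast, Nat.floor_div_natCast]
    refine Set.mem_iUnion.2 ⟨Nat.pair j0 k0, ?_⟩
    rw [ht]
    simp only [Nat.unpair_pair]
    rw [if_pos hmem]
    exact hxblock
  -- the tsum equals the finite sum of caps over J
  have htsum : ∑' m, EMetric.diam (t m) ^ β = ∑ p ∈ J, (cap β p.1 : ℝ≥0∞) := by
    rw [tsum_eq_sum (s := J.image (fun p => Nat.pair p.1 p.2))
      (by
        intro m hm
        by_cases h : m.unpair ∈ J
        · exact absurd (Finset.mem_image.2 ⟨m.unpair, h, by rw [Nat.pair_unpair]⟩) hm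
        · rw [ht]
          simp only [if_neg h, EMetric.diam_empty]
          rw [show EMetric.diam (∅ : Set ℝ) = 0 from EMetric.diam_empty]
          exact ENNReal.zero_rpow_of_pos hβ0)]
    rw [Finset.sum_image (by
      intro p _ q _ hpq
      have := Nat.pair_eq_pair.mp hpq
      exact Prod.ext this.1 this.2)]
    refine Finset.sum_congr rfl fun p hp => ?_
    have hup : (Nat.pair p.1 p.2).unpair = p := by
      rw [Nat.unpair_pair]
    rw [ht]
    simp only [hup, if_pos hp]
    exact ediam_leaf_rpow β hβ0 p.1 p.2
  -- the finite sum of caps is at most the total mass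
  have hsum_le : ∑ p ∈ J, cap β p.1 ≤ Tmass A β n := by
    set fib : ℕ × ℕ → Finset ℕ :=
      fun p => (Finset.range (2 ^ (n + 1))).filter (fun i => i / 2 ^ (n - p.1) = p.2) with hfib
    have hJn : ∀ p ∈ J, p.1 ≤ n ∧ blockSum n (W A β n n) p.1 p.2 = cap β p.1 ∧
        ∀ j' < p.1, ¬ (blockSum n (W A β n n) j' (p.2 / 2 ^ (p.1 - j')) = cap β j') := by
      intro p hp
      rw [hJ, Finset.mem_filter, Finset.mem_product, Finset.mem_range] at hp
      exact ⟨by omega, hp.2.1, hp.2.2⟩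
    have hkey : ∀ p ∈ J, ∀ q ∈ J, q.1 < p.1 → ∀ i, i ∈ fib p → i ∈ fib q → False := by
      intro p hp q hq hqp i hip hiq
      rw [hfib, Finset.mem_filter] at hip hiq
      have hp' := hJn p hp
      have hq' := hJn q hq
      have hdiv : q.2 = p.2 / 2 ^ (p.1 - q.1) := by
        have hpn : p.1 ≤ n := (hJn p hp).1
        rw [← hip.2, ← hiq.2, div_pow_add]
        have he : n - p.1 + (p.1 - q.1) = n - q.1 := by omega
        rw [he]
      exact hp'.2.2 q.1 hqp (by rw [← hdiv]; exact hq'.2.1)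
    have hdisj : (J : Set (ℕ × ℕ)).PairwiseDisjoint fib := by
      intro p hp q hq hpq
      show Disjoint (fib p) (fib q)
      rw [Finset.disjoint_left]
      intro i hip hiq
      rcases lt_trichotomy p.1 q.1 with h | h | h
      · exact hkey q hq p hp h i hiq hip
      · apply hpq
        rw [hfib, Finset.mem_filter] at hip hiq
        have : p.2 = q.2 := by rw [← hip.2, ← hiq.2, h]
        exact Prod.ext h this
      · exact hkey p hp q hq h i hip hiq
    calc ∑ p ∈ J, cap β p.1
        = ∑ p ∈ J, ∑ i ∈ fib p, W A β n n i := by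
          refine Finset.sum_congr rfl fun p hp => ?_
          rw [← (hJn p hp).2.1]
          rfl
      _ = ∑ i ∈ J.biUnion fib, W A β n n i := (Finset.sum_biUnion hdisj).symm
      _ ≤ Tmass A β n := by
          refine Finset.sum_le_sum_of_subset ?_
          intro i hi
          rw [Finset.mem_biUnion] at hi
          obtain ⟨p, _, hip⟩ := hi
          rw [hfib, Finset.mem_filter] at hip
          exact hip.1
  calc c ≤ ∑' m, EMetric.diam (t m) ^ β := hc t hcov
    _ = ∑ p ∈ J, (cap β p.1 : ℝ≥0∞) := htsum
    _ = ((∑ p ∈ J, cap β p.1 : ℝ≥0) : ℝ≥0∞) := by rw [ENNReal.coe_finset_sum]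
    _ ≤ (Tmass A β n : ℝ≥0∞) := ENNReal.coe_le_coe.2 hsum_le

lemma exists_content (hβ0 : 0 < β) (hpos : 0 < μH[β] A) :
    ∃ c : ℝ≥0, 0 < c ∧ ∀ t : ℕ → Set ℝ, A ⊆ (⋃ m, t m) →
      (c : ℝ≥0∞) ≤ ∑' m, EMetric.diam (t m) ^ β := by
  by_contra hcon
  push_neg at hcon
  have hch : ∀ m : ℕ, ∃ t : ℕ → Set ℝ, (A ⊆ ⋃ i, t i) ∧
      ∑' i, EMetric.diam (t i) ^ β < (((2 : ℝ≥0)⁻¹ ^ m) ^ β : ℝ≥0) := by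
    intro m
    obtain ⟨t, h1, h2⟩ := hcon (((2:ℝ≥0)⁻¹ ^ m) ^ β) (NNReal.rpow_pos (by positivity))
    exact ⟨t, h1, h2⟩
  choose t hcov hlt using hch
  have hdiam : ∀ m (i : ℕ), EMetric.diam (t m i) ≤ (((2:ℝ≥0)⁻¹ ^ m : ℝ≥0) : ℝ≥0∞) := by
    intro m i
    by_contra hgt
    push_neg at hgt
    have h1 : (((2:ℝ≥0)⁻¹ ^ m : ℝ≥0) : ℝ≥0∞) ^ β ≤ EMetric.diam (t m i) ^ β :=
      ENNReal.rpow_le_rpow (le_of_lt hgt) hβ0.le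
    have h2 : EMetric.diam (t m i) ^ β ≤ ∑' i, EMetric.diam (t m i) ^ β := ENNReal.le_tsum i
    have h3 := lt_of_le_of_lt (h1.trans h2) (hlt m)
    rw [← ENNReal.coe_rpow_of_ne_zero (by positivity)] at h3
    exact lt_irrefl _ h3
  have hr0 : Tendsto (fun m : ℕ => (((2:ℝ≥0)⁻¹ ^ m : ℝ≥0) : ℝ≥0∞)) atTop (𝓝 0) := by
    rw [← ENNReal.coe_zero, ENNReal.tendsto_coe]
    exact NNReal.tendsto_pow_atTop_nhds_zero_of_lt_one
      (by rw [← NNReal.coe_lt_coe]; norm_num)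
  have hμ := Measure.hausdorffMeasure_le_liminf_tsum (ι := fun _ : ℕ => ℕ) β A
      (fun m => (((2:ℝ≥0)⁻¹ ^ m : ℝ≥0) : ℝ≥0∞)) hr0 t
      (Eventually.of_forall hdiam) (Eventually.of_forall hcov)
  have hgeo : ∀ m : ℕ, (((2:ℝ≥0)⁻¹ ^ m) ^ β : ℝ≥0) = ((2:ℝ≥0)⁻¹ ^ β : ℝ≥0) ^ m := by
    intro m
    rw [← NNReal.rpow_natCast ((2:ℝ≥0)⁻¹) m, ← NNReal.rpow_natCast ((2:ℝ≥0)⁻¹ ^ β) m,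
      ← NNReal.rpow_mul, ← NNReal.rpow_mul, mul_comm]
  have hlim : Tendsto (fun m => ∑' i, EMetric.diam (t m i) ^ β) atTop (𝓝 0) := by
    refine tendsto_of_tendsto_of_tendsto_of_le_of_le tendsto_const_nhds ?_
      (fun m => zero_le) (fun m => le_of_lt (hlt m))
    have : Tendsto (fun m : ℕ => ((((2:ℝ≥0)⁻¹ ^ β : ℝ≥0) ^ m : ℝ≥0) : ℝ≥0∞)) atTop (𝓝 0) := by
      rw [← ENNReal.coe_zero, ENNReal.tendsto_coe]
      exact NNReal.tendsto_pow_atTop_nhds_zero_of_lt_one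
        (NNReal.rpow_lt_one (by rw [← NNReal.coe_lt_coe]; norm_num) hβ0)
    refine this.congr fun m => ?_
    rw [← hgeo]
  rw [show (fun n => ∑' (i : ℕ), Metric.ediam (t n i) ^ β) = (fun m => ∑' i, EMetric.diam (t m i) ^ β) from rfl, hlim.liminf_eq] at hμ
  exact hpos.ne' (le_antisymm hμ (zero_le))

def Fn (n : ℕ) (x : ℝ) : ℝ≥0 :=
  ∑ i ∈ Finset.range (2 ^ (n + 1)), if pt A n i ≤ x then W A β n n i else 0

lemma Fn_mono (n : ℕ) : Monotone (Fn A β n) := by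
  intro u v huv
  refine Finset.sum_le_sum fun i _ => ?_
  by_cases h : pt A n i ≤ u
  · rw [if_pos h, if_pos (h.trans huv)]
  · rw [if_neg h]
    exact zero_le

lemma Fn_le_Tmass (n : ℕ) (x : ℝ) : Fn A β n x ≤ Tmass A β n :=
  Finset.sum_le_sum fun i _ => by split <;> simp

lemma Fn_split (n : ℕ) {u v : ℝ} (huv : u ≤ v) :
    Fn A β n v = Fn A β n u +
      ∑ i ∈ Finset.range (2 ^ (n + 1)),
        if pt A n i ∈ Set.Ioc u v then W A β n n i else 0 := by
  rw [Fn, Fn, ← Finset.sum_add_distrib]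
  refine Finset.sum_congr rfl fun i _ => ?_
  by_cases h1 : pt A n i ≤ u
  · have h3 : pt A n i ∉ Set.Ioc u v := fun hc => absurd h1 (not_le.2 hc.1)
    rw [if_pos (h1.trans huv), if_pos h1, if_neg h3, add_zero]
  · by_cases h2 : pt A n i ≤ v
    · rw [if_pos h2, if_neg h1, if_pos ⟨not_le.1 h1, h2⟩, zero_add]
    · rw [if_neg h2, if_neg h1, if_neg (fun hc => h2 hc.2), add_zero]

lemma Fn_gap (n : ℕ) {u v : ℝ} (huv : u ≤ v) (hgap : Set.Ioc u v ∩ A = ∅) :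
    Fn A β n v = Fn A β n u := by
  rw [Fn_split A β n huv]
  have hz : ∀ i ∈ Finset.range (2 ^ (n + 1)),
      (if pt A n i ∈ Set.Ioc u v then W A β n n i else 0) = 0 := by
    intro i _
    split
    · next h =>
        by_cases hw : W A β n n i = 0
        · exact hw
        · exfalso
          have hw0 : w0 A β n i ≠ 0 :=
            fun h0 => hw (le_antisymm (h0 ▸ W_le_w0 A β n n i) (zero_le))
          have hne := (w0_ne_zero_iff A β n i).1 hw0
          have hptA : pt A n i ∈ A := (pt_mem A n i hne).1
          exact Set.eq_empty_iff_forall_notMem.1 hgap _ ⟨h, hptA⟩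
    · rfl
  rw [Finset.sum_eq_zero hz, add_zero]

lemma Fn_neg (hA1 : A ⊆ Set.Icc 0 1) (n : ℕ) {x : ℝ} (hx : x < 0) : Fn A β n x = 0 := by
  refine Finset.sum_eq_zero fun i _ => ?_
  rw [if_neg]
  intro h
  have := (pt_mem_Icc A hA1 n i).1
  linarith

lemma Fn_one (hA1 : A ⊆ Set.Icc 0 1) (n : ℕ) {x : ℝ} (hx : 1 ≤ x) :
    Fn A β n x = Tmass A β n := by
  refine Finset.sum_congr rfl fun i _ => ?_
  rw [if_pos (le_trans (pt_mem_Icc A hA1 n i).2 hx)]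

lemma Fn_incr (hA1 : A ⊆ Set.Icc 0 1) (hβ0 : 0 < β) (n : ℕ) {a y : ℝ} (h1 : 0 < y - a)
    (h2 : (2:ℝ)⁻¹ ^ n ≤ y - a) :
    Fn A β n y ≤ Fn A β n a + 3 * Real.toNNReal (y - a) ^ β := by
  rw [Fn_split A β n (by linarith : a ≤ y)]
  refine add_le_add_right ?_ _
  have hone : (1:ℝ≥0) ≤ Real.toNNReal (y - a) ^ β → True := fun _ => trivial
  rcases le_or_gt 2 (y - a) with hℓ | hℓ
  · have hone' : (1:ℝ≥0) ≤ Real.toNNReal (y - a) ^ β := by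
      calc (1:ℝ≥0) = 1 ^ β := (NNReal.one_rpow β).symm
        _ ≤ Real.toNNReal (y - a) ^ β := by
            refine NNReal.rpow_le_rpow ?_ hβ0.le
            rw [← Real.toNNReal_one]
            exact Real.toNNReal_mono (by linarith)
    calc (∑ i ∈ Finset.range (2 ^ (n + 1)),
          if pt A n i ∈ Set.Ioc a y then W A β n n i else 0)
        ≤ ∑ i ∈ Finset.range (2 ^ (n + 1)), W A β n n i :=
          Finset.sum_le_sum fun i _ => by split <;> simp
      _ = Tmass A β n := rfl
      _ ≤ 2 := Tmass_le_two A β n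
      _ ≤ 3 * 1 := by norm_num
      _ ≤ 3 * Real.toNNReal (y - a) ^ β := mul_le_mul_right hone' 3
  · have hex : ∃ j : ℕ, 1 ≤ (y - a) * 2 ^ j := by
      obtain ⟨j, hj⟩ := pow_unbounded_of_one_lt ((y - a)⁻¹) (one_lt_two (α := ℝ))
      refine ⟨j, ?_⟩
      rw [inv_eq_one_div, div_lt_iff₀ h1] at hj
      nlinarith
    have hj1 : 1 ≤ (y - a) * 2 ^ Nat.find hex := Nat.find_spec hex
    have hjn : Nat.find hex ≤ n := by
      refine Nat.find_le ?_
      have hmul : (2:ℝ)⁻¹ ^ n * 2 ^ n = 1 := by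
        rw [← mul_pow]
        norm_num
      nlinarith [pow_pos (by norm_num : (0:ℝ) < 2) n]
    set j := Nat.find hex with hjdef
    have hj2 : (y - a) * 2 ^ j ≤ 2 := by
      rcases Nat.eq_zero_or_pos j with h0 | hposj
      · rw [h0, pow_zero, mul_one]
        linarith
      · have hmin : ¬ (1 ≤ (y - a) * 2 ^ (j - 1)) :=
          Nat.find_min hex (by omega)
        push_neg at hmin
        have hpow : (2:ℝ) ^ j = 2 ^ (j - 1) * 2 := by
          rw [← pow_succ]
          congr 1
          omega
        nlinarith
    set K := ⌊(max a 0) * 2 ^ j⌋₊ with hK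
    set fib : ℕ → Finset ℕ :=
      fun k => (Finset.range (2 ^ (n + 1))).filter (fun i => i / 2 ^ (n - j) = k) with hfib
    have hmap : ∀ i ∈ Finset.range (2 ^ (n + 1)),
        (if pt A n i ∈ Set.Ioc a y then W A β n n i else 0) ≠ 0 →
        i ∈ (Finset.Icc K (K + 2)).biUnion fib := by
      intro i hi hne
      have hpt : pt A n i ∈ Set.Ioc a y := by
        by_contra h
        rw [if_neg h] at hne
        exact hne rfl
      rw [if_pos hpt] at hne
      have hw0 : w0 A β n i ≠ 0 :=
        fun h0 => hne (le_antisymm (h0 ▸ W_le_w0 A β n n i) (zero_le))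
      have hnon := (w0_ne_zero_iff A β n i).1 hw0
      have hmem := pt_mem A n i hnon
      have hpt0 : 0 ≤ pt A n i := (hA1 hmem.1).1
      have hflr : ⌊pt A n i * 2 ^ n⌋₊ = i := (mem_leaf_iff n i _ hpt0).1 hmem.2
      have hdivk : i / 2 ^ (n - j) = ⌊pt A n i * 2 ^ j⌋₊ := by
        have hstep : ⌊pt A n i * 2 ^ n⌋₊ / 2 ^ (n - j) = ⌊pt A n i * 2 ^ j⌋₊ := by
          rw [← Nat.floor_div_natCast]
          congr 1
          push_cast
          rw [div_eq_iff (by positivity), mul_assoc, ← pow_add]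
          have he : j + (n - j) = n := by omega
          rw [he]
        rw [hflr] at hstep
        exact hstep
      rw [Finset.mem_biUnion]
      refine ⟨i / 2 ^ (n - j), ?_, by rw [hfib, Finset.mem_filter]; exact ⟨hi, rfl⟩⟩
      rw [Finset.mem_Icc, hdivk]
      have h2jpos : (0:ℝ) < 2 ^ j := by positivity
      constructor
      · refine Nat.floor_mono ?_
        have hmle : max a 0 ≤ pt A n i := max_le (le_of_lt hpt.1) hpt0
        exact mul_le_mul_of_nonneg_right hmle h2jpos.le
      · have hyb : pt A n i * 2 ^ j ≤ max a 0 * 2 ^ j + 2 := by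
          have h5 : pt A n i ≤ y := hpt.2
          have h6 : y ≤ max a 0 + (y - a) := by
            have := le_max_left a 0
            linarith
          nlinarith [le_max_left a 0, le_max_right a 0]
        calc ⌊pt A n i * 2 ^ j⌋₊ ≤ ⌊max a 0 * 2 ^ j + ((2:ℕ):ℝ)⌋₊ :=
              Nat.floor_mono (by push_cast; linarith)
          _ = K + 2 := by
              rw [Nat.floor_add_natCast (by positivity)]
    have hdisj : (↑(Finset.Icc K (K + 2)) : Set ℕ).PairwiseDisjoint fib := by
      intro k1 _ k2 _ hne
      show Disjoint (fib k1) (fib k2)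
      rw [Finset.disjoint_left]
      intro i hi1 hi2
      rw [hfib, Finset.mem_filter] at hi1 hi2
      exact hne (by rw [← hi1.2, ← hi2.2])
    calc (∑ i ∈ Finset.range (2 ^ (n + 1)),
          if pt A n i ∈ Set.Ioc a y then W A β n n i else 0)
        ≤ ∑ i ∈ (Finset.Icc K (K + 2)).biUnion fib,
            (if pt A n i ∈ Set.Ioc a y then W A β n n i else 0) :=
          Finset.sum_le_sum_of_ne_zero hmap
      _ ≤ ∑ i ∈ (Finset.Icc K (K + 2)).biUnion fib, W A β n n i :=
          Finset.sum_le_sum fun i _ => by split <;> simp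
      _ = ∑ k ∈ Finset.Icc K (K + 2), blockSum n (W A β n n) j k :=
          Finset.sum_biUnion hdisj
      _ ≤ ∑ _k ∈ Finset.Icc K (K + 2), cap β j :=
          Finset.sum_le_sum fun k _ => blockSum_le A β n n (le_refl n) j (by omega) hjn k
      _ = 3 * cap β j := by
          rw [Finset.sum_const, Nat.card_Icc]
          have h3 : K + 2 + 1 - K = 3 := by omega
          rw [h3]
          rw [nsmul_eq_mul]
          norm_num
      _ ≤ 3 * Real.toNNReal (y - a) ^ β := by
          refine mul_le_mul_right ?_ 3
          rw [cap]
          refine NNReal.rpow_le_rpow ?_ hβ0.le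
          have h2j : (0:ℝ) < 2 ^ j := by positivity
          have hr : ((2:ℝ) ^ j)⁻¹ ≤ y - a := by
            rw [← one_div]
            exact (div_le_iff₀ h2j).mpr (by linarith)
          rw [← NNReal.coe_le_coe]
          push_cast
          rw [Real.coe_toNNReal _ h1.le]
          exact hr

end

end FrostmanAux

open FrostmanAux in
/-- Frostman's lemma: a compact set `A ⊆ [0,1]` has positive `β`-dimensional
Hausdorff measure iff it carries a nonzero finite Borel measure `μ` with
`μ(B) ≤ C ⬝ (diam B)^β` for every interval `B ⊆ [0,1]`. -/
theorem frostman_lemma (A : Set ℝ) (hA : IsCompact A) (hA1 : A ⊆ Set.Icc 0 1)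
    (β : ℝ) (hβ0 : 0 < β) (hβ1 : β < 1) :
    0 < μH[β] A ↔
      ∃ μ : Measure ℝ, IsFiniteMeasure μ ∧ μ ≠ 0 ∧ μ Aᶜ = 0 ∧
        ∃ C : ℝ, 0 < C ∧ ∀ B : Set ℝ, B ⊆ Set.Icc 0 1 → B.OrdConnected →
          μ B ≤ ENNReal.ofReal (C * diam B ^ β) := by
  constructor
  · -- hard direction: build a Frostman measure
    intro hpos
    obtain ⟨c, hc0, hc⟩ := exists_content A β hβ0 hpos
    have hmass : ∀ n, c ≤ Tmass A β n := fun n =>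
      ENNReal.coe_le_coe.1 (mass_lb A β hA1 hβ0 (c : ℝ≥0∞) hc n)
    set 𝒰 : Ultrafilter ℕ := Filter.hyperfilter ℕ with h𝒰
    have hatTop : (𝒰 : Filter ℕ) ≤ atTop := Nat.hyperfilter_le_atTop
    -- limits of the cumulative mass functions along the ultrafilter
    have hlim : ∀ x : ℝ, ∃ L, L ∈ Set.Icc (0:ℝ) 2 ∧
        Tendsto (fun n => ((Fn A β n x : ℝ≥0) : ℝ)) 𝒰 (𝓝 L) := by
      intro x
      have hbdd : ∀ n, ((Fn A β n x : ℝ≥0) : ℝ) ∈ Set.Icc (0:ℝ) 2 := by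
        intro n
        refine ⟨(Fn A β n x).coe_nonneg, ?_⟩
        have h2 := le_trans (Fn_le_Tmass A β n x) (Tmass_le_two A β n)
        exact_mod_cast h2
      obtain ⟨L, hL, hle⟩ := isCompact_Icc.ultrafilter_le_nhds
        (𝒰.map (fun n => ((Fn A β n x : ℝ≥0) : ℝ)))
        (by
          rw [Ultrafilter.coe_map, le_principal_iff, mem_map]
          exact univ_mem' hbdd)
      refine ⟨L, hL, ?_⟩
      rwa [Ultrafilter.coe_map] at hle
    choose F hF0 hFt using hlim
    have hFmono : Monotone F := by
      intro u v huv
      refine le_of_tendsto_of_tendsto' (hFt u) (hFt v) fun n => ?_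
      exact_mod_cast Fn_mono A β n huv
    have hFneg : ∀ x < (0:ℝ), F x = 0 := by
      intro x hx
      refine tendsto_nhds_unique (hFt x) ?_
      have he : (fun n => ((Fn A β n x : ℝ≥0):ℝ)) = fun _ => (0:ℝ) := by
        funext n
        rw [Fn_neg A β hA1 n hx]
        simp
      rw [he]
      exact tendsto_const_nhds
    have hTm : Tendsto (fun n => ((Tmass A β n : ℝ≥0):ℝ)) 𝒰 (𝓝 (F 1)) := by
      have he : (fun n => ((Fn A β n (1:ℝ) : ℝ≥0):ℝ))
          = fun n => ((Tmass A β n : ℝ≥0):ℝ) := by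
        funext n
        rw [Fn_one A β hA1 n le_rfl]
      rw [← he]
      exact hFt 1
    have hFone : ∀ x : ℝ, 1 ≤ x → F x = F 1 := by
      intro x hx
      refine tendsto_nhds_unique (hFt x) ?_
      have he : (fun n => ((Fn A β n x : ℝ≥0):ℝ))
          = fun n => ((Fn A β n (1:ℝ) : ℝ≥0):ℝ) := by
        funext n
        rw [Fn_one A β hA1 n hx, Fn_one A β hA1 n le_rfl]
      rw [he]
      exact hFt 1
    have hF1c : (c:ℝ) ≤ F 1 :=
      ge_of_tendsto hTm (Eventually.of_forall fun n => by exact_mod_cast hmass n)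
    have hFgap : ∀ u v : ℝ, u ≤ v → Set.Ioc u v ∩ A = ∅ → F v = F u := by
      intro u v huv hgap
      refine tendsto_nhds_unique (hFt v) ?_
      have he : (fun n => ((Fn A β n v : ℝ≥0):ℝ)) = fun n => ((Fn A β n u : ℝ≥0):ℝ) := by
        funext n
        rw [Fn_gap A β n huv hgap]
      rw [he]
      exact hFt u
    have hFincr : ∀ u v : ℝ, u < v → F v ≤ F u + 3 * (v - u) ^ β := by
      intro u v huv
      have hev : ∀ᶠ n in (𝒰 : Filter ℕ), ((Fn A β n v : ℝ≥0):ℝ)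
          ≤ ((Fn A β n u : ℝ≥0):ℝ) + 3 * (v - u) ^ β := by
        have hsmall : ∀ᶠ n in atTop, (2:ℝ)⁻¹ ^ n ≤ v - u := by
          have htend : Tendsto (fun n : ℕ => (2:ℝ)⁻¹ ^ n) atTop (𝓝 0) :=
            tendsto_pow_atTop_nhds_zero_of_lt_one (by norm_num) (by norm_num)
          exact (htend.eventually_lt_const (by linarith : (0:ℝ) < v - u)).mono
            fun n h => le_of_lt h
        refine (hsmall.filter_mono hatTop).mono fun n hn => ?_
        have hkey := Fn_incr A β hA1 hβ0 n (by linarith : 0 < v - u) hn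
        have hcast := NNReal.coe_le_coe.2 hkey
        rw [NNReal.coe_add, NNReal.coe_mul, NNReal.coe_rpow,
          Real.coe_toNNReal _ (by linarith : (0:ℝ) ≤ v - u)] at hcast
        have h3 : ((3:ℝ≥0):ℝ) = 3 := by norm_num
        rw [h3] at hcast
        exact hcast
      exact le_of_tendsto_of_tendsto (hFt v) ((hFt u).add tendsto_const_nhds) hev
    -- the Stieltjes measure
    set G := hFmono.stieltjesFunction with hGdef
    set μ := G.measure with hμdef
    have hGx : ∀ x, G x = Function.rightLim F x := fun x => rfl
    have hGneg : ∀ x < (0:ℝ), G x = 0 := by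
      intro x hx
      rw [hGx]
      apply le_antisymm
      · have h := hFmono.rightLim_le (show x < x/2 by linarith)
        rwa [hFneg (x/2) (by linarith)] at h
      · have h := hFmono.le_rightLim (le_refl x)
        rwa [hFneg x hx] at h
    have hGone : ∀ x : ℝ, 1 ≤ x → G x = F 1 := by
      intro x hx
      rw [hGx]
      apply le_antisymm
      · have h := hFmono.rightLim_le (show x < x + 1 by linarith)
        rwa [hFone (x+1) (by linarith)] at h
      · have h := hFmono.le_rightLim (le_refl x)
        rwa [hFone x hx] at h
    have hGbot : Tendsto G atBot (𝓝 0) := by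
      refine Tendsto.congr' ?_ (tendsto_const_nhds (α := ℝ) (f := atBot))
      filter_upwards [eventually_lt_atBot (0:ℝ)] with x hx
      exact (hGneg x hx).symm
    have hGtop : Tendsto G atTop (𝓝 (F 1)) := by
      refine Tendsto.congr' ?_ (tendsto_const_nhds (α := ℝ) (f := atTop))
      filter_upwards [eventually_ge_atTop (1:ℝ)] with x hx
      exact (hGone x hx).symm
    have hμuniv : μ Set.univ = ENNReal.ofReal (F 1) := by
      rw [hμdef, G.measure_univ hGbot hGtop, sub_zero]
    -- interval bounds
    have hIoc : ∀ u v : ℝ, u < v → μ (Set.Ioc u v) ≤ ENNReal.ofReal (3 * (v - u) ^ β) := by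
      intro u v huv
      have key : ∀ y, v < y → μ (Set.Ioc u v) ≤ ENNReal.ofReal (3 * (y - u) ^ β) := by
        intro y hy
        rw [hμdef, G.measure_Ioc]
        have hGv : G v ≤ F y := hFmono.rightLim_le hy
        have hGu : F u ≤ G u := hFmono.le_rightLim (le_refl u)
        have h3 := hFincr u y (by linarith)
        exact ENNReal.ofReal_le_ofReal (by linarith)
      have htnd : Tendsto (fun y => ENNReal.ofReal (3 * (y - u) ^ β)) (𝓝[>] v)
          (𝓝 (ENNReal.ofReal (3 * (v - u) ^ β))) := by
        refine (ENNReal.continuous_ofReal.tendsto _).comp ?_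
        refine Tendsto.const_mul _ ?_
        have hcont : ContinuousAt (fun t : ℝ => t ^ β) (v - u) :=
          Real.continuousAt_rpow_const _ _ (Or.inr hβ0.le)
        have hsub : Tendsto (fun y : ℝ => y - u) (𝓝[>] v) (𝓝 (v - u)) :=
          tendsto_nhdsWithin_of_tendsto_nhds ((continuous_id.sub continuous_const).tendsto v)
        exact hcont.tendsto.comp hsub
      refine ge_of_tendsto htnd ?_
      filter_upwards [self_mem_nhdsWithin] with y hy
      exact key y hy
    have hIcc : ∀ u v : ℝ, u ≤ v → μ (Set.Icc u v) ≤ ENNReal.ofReal (3 * (v - u) ^ β) := by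
      intro u v huv
      have key : ∀ u', u' < u → μ (Set.Icc u v) ≤ ENNReal.ofReal (3 * (v - u') ^ β) := by
        intro u' hu'
        calc μ (Set.Icc u v) ≤ μ (Set.Ioc u' v) :=
              measure_mono (fun x hx => ⟨lt_of_lt_of_le hu' hx.1, hx.2⟩)
          _ ≤ _ := hIoc u' v (by linarith)
      have htnd : Tendsto (fun u' => ENNReal.ofReal (3 * (v - u') ^ β)) (𝓝[<] u)
          (𝓝 (ENNReal.ofReal (3 * (v - u) ^ β))) := by
        refine (ENNReal.continuous_ofReal.tendsto _).comp ?_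
        refine Tendsto.const_mul _ ?_
        have hcont : ContinuousAt (fun t : ℝ => t ^ β) (v - u) :=
          Real.continuousAt_rpow_const _ _ (Or.inr hβ0.le)
        have hsub : Tendsto (fun u' : ℝ => v - u') (𝓝[<] u) (𝓝 (v - u)) :=
          tendsto_nhdsWithin_of_tendsto_nhds ((continuous_const.sub continuous_id).tendsto u)
        exact hcont.tendsto.comp hsub
      refine ge_of_tendsto htnd ?_
      filter_upwards [self_mem_nhdsWithin] with u' hu'
      exact key u' hu'
    refine ⟨μ, ⟨by rw [hμuniv]; exact ENNReal.ofReal_lt_top⟩, ?_, ?_, 3, by norm_num, ?_⟩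
    · -- μ ≠ 0
      intro h0
      have huniv : μ Set.univ ≠ 0 := by
        rw [hμuniv]
        exact (ENNReal.ofReal_pos.2 (lt_of_lt_of_le (by exact_mod_cast hc0) hF1c)).ne'
      rw [h0] at huniv
      simp at huniv
    · -- μ Aᶜ = 0
      refine measure_null_of_locally_null _ fun x hx => ?_
      have hopen : Aᶜ ∈ 𝓝 x := hA.isClosed.isOpen_compl.mem_nhds hx
      obtain ⟨ε, hε, hball⟩ := Metric.mem_nhds_iff.1 hopen
      refine ⟨Set.Ioo (x - ε/2) (x + ε/2), mem_nhdsWithin_of_mem_nhds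
        (Ioo_mem_nhds (by linarith) (by linarith)), ?_⟩
      have hgap : Set.Ioc (x - ε/2) (x + 3*ε/4) ∩ A = ∅ := by
        rw [Set.eq_empty_iff_forall_notMem]
        rintro z ⟨hz1, hz2⟩
        refine hball ?_ hz2
        rw [Metric.mem_ball, Real.dist_eq, abs_lt]
        constructor <;> [linarith [hz1.1]; linarith [hz1.2]]
      have hF34 : F (x + 3*ε/4) = F (x - ε/2) := hFgap _ _ (by linarith) hgap
      have hzero : μ (Set.Ioc (x - ε/2) (x + ε/2)) = 0 := by
        rw [hμdef, G.measure_Ioc, ENNReal.ofReal_eq_zero]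
        have h1 : G (x + ε/2) ≤ F (x + 3*ε/4) := hFmono.rightLim_le (by linarith)
        have h2 : F (x - ε/2) ≤ G (x - ε/2) := hFmono.le_rightLim (le_refl _)
        linarith
      exact le_antisymm (le_trans (measure_mono Set.Ioo_subset_Ioc_self) hzero.le) (zero_le)
    · -- the Frostman bound with C = 3
      intro B hB1 hBconn
      rcases B.eq_empty_or_nonempty with rfl | hBne
      · simp
      · have hbddA : BddAbove B := ⟨1, fun z hz => (hB1 hz).2⟩
        have hbddB : BddBelow B := ⟨0, fun z hz => (hB1 hz).1⟩
        set a := sInf B with ha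
        set b := sSup B with hb
        have hab : a ≤ b := csInf_le_csSup hBne hbddB hbddA
        have hBsub : B ⊆ Set.Icc a b := fun z hz => ⟨csInf_le hbddB hz, le_csSup hbddA hz⟩
        have hBbdd : Bornology.IsBounded B := (Metric.isBounded_Icc a b).subset hBsub
        have hdiam : b - a ≤ diam B := by
          refine le_of_forall_pos_le_add fun ε hε => ?_
          obtain ⟨yy, hyyB, hyy⟩ := exists_lt_of_lt_csSup hBne (show b - ε/2 < b by linarith)
          obtain ⟨zz, hzzB, hzz⟩ := exists_lt_of_csInf_lt hBne (show a < a + ε/2 by linarith)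
          have hd := Metric.dist_le_diam_of_mem hBbdd hyyB hzzB
          rw [Real.dist_eq] at hd
          have h5 : yy - zz ≤ diam B := le_trans (le_abs_self _) hd
          linarith
        calc μ B ≤ μ (Set.Icc a b) := measure_mono hBsub
          _ ≤ ENNReal.ofReal (3 * (b - a) ^ β) := hIcc a b hab
          _ ≤ ENNReal.ofReal (3 * diam B ^ β) := by
              refine ENNReal.ofReal_le_ofReal ?_
              have h1 : (b - a) ^ β ≤ diam B ^ β :=
                Real.rpow_le_rpow (by linarith) hdiam hβ0.le
              linarith
  · -- easy direction: mass distribution principle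
    rintro ⟨μ, hfin, hne, hAc, C, hC, hBound⟩
    set ν := (ENNReal.ofReal C)⁻¹ • μ with hν
    have hCfin : ENNReal.ofReal C ≠ ⊤ := ENNReal.ofReal_ne_top
    have hC0 : ENNReal.ofReal C ≠ 0 := (ENNReal.ofReal_pos.2 hC).ne'
    have hνle : ν ≤ μH[β] := by
      refine Measure.le_hausdorffMeasure β ν 1 one_pos fun s hs => ?_
      have hμs : μ s ≤ μ (s ∩ A) := by
        calc μ s ≤ μ ((s ∩ A) ∪ Aᶜ) := measure_mono (fun z hz => by
              by_cases hzA : z ∈ A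
              · exact Or.inl ⟨hz, hzA⟩
              · exact Or.inr hzA)
          _ ≤ μ (s ∩ A) + μ Aᶜ := measure_union_le _ _
          _ = μ (s ∩ A) := by rw [hAc, add_zero]
      rcases (s ∩ A).eq_empty_or_nonempty with hemp | hsAne
      · have hs0 : μ s = 0 := by
          rw [hemp] at hμs
          simpa using hμs
        have : ν s = 0 := by
          rw [hν, Measure.smul_apply, hs0, smul_eq_mul, mul_zero]
        rw [this]
        exact zero_le
      · have hsub01 : s ∩ A ⊆ Set.Icc 0 1 := fun z hz => hA1 hz.2
        have hbddA' : BddAbove (s ∩ A) := ⟨1, fun z hz => (hsub01 hz).2⟩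
        have hbddB' : BddBelow (s ∩ A) := ⟨0, fun z hz => (hsub01 hz).1⟩
        set a := sInf (s ∩ A) with ha
        set b := sSup (s ∩ A) with hb
        have hab : a ≤ b := csInf_le_csSup hsAne hbddB' hbddA'
        have ha0 : 0 ≤ a := le_csInf hsAne (fun z hz => (hsub01 hz).1)
        have hb1 : b ≤ 1 := csSup_le hsAne (fun z hz => (hsub01 hz).2)
        have hBd := hBound (Set.Icc a b) (Set.Icc_subset_Icc ha0 hb1) Set.ordConnected_Icc
        have hsbdd : Bornology.IsBounded s :=
          Metric.isBounded_iff_ediam_ne_top.2 (ne_top_of_le_ne_top ENNReal.one_ne_top hs)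
        have hdiam2 : b - a ≤ diam s := by
          refine le_of_forall_pos_le_add fun ε hε => ?_
          obtain ⟨yy, hyyB, hyy⟩ := exists_lt_of_lt_csSup hsAne (show b - ε/2 < b by linarith)
          obtain ⟨zz, hzzB, hzz⟩ := exists_lt_of_csInf_lt hsAne (show a < a + ε/2 by linarith)
          have hd := Metric.dist_le_diam_of_mem hsbdd hyyB.1 hzzB.1
          rw [Real.dist_eq] at hd
          have h5 : yy - zz ≤ diam s := le_trans (le_abs_self _) hd
          linarith
        have hμs2 : μ s ≤ ENNReal.ofReal (C * (b - a) ^ β) := by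
          calc μ s ≤ μ (s ∩ A) := hμs
            _ ≤ μ (Set.Icc a b) := measure_mono
                (fun z hz => ⟨csInf_le hbddB' hz, le_csSup hbddA' hz⟩)
            _ ≤ ENNReal.ofReal (C * diam (Set.Icc a b) ^ β) := hBd
            _ = ENNReal.ofReal (C * (b - a) ^ β) := by rw [Real.diam_Icc hab]
        have hfinal : μ s ≤ ENNReal.ofReal C * (EMetric.diam s) ^ β := by
          calc μ s ≤ ENNReal.ofReal (C * (b - a) ^ β) := hμs2
            _ ≤ ENNReal.ofReal (C * diam s ^ β) := by
                refine ENNReal.ofReal_le_ofReal ?_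
                have h1 : (b - a) ^ β ≤ diam s ^ β :=
                  Real.rpow_le_rpow (by linarith) hdiam2 hβ0.le
                nlinarith
            _ = ENNReal.ofReal C * ENNReal.ofReal (diam s ^ β) :=
                ENNReal.ofReal_mul hC.le
            _ = ENNReal.ofReal C * (EMetric.diam s) ^ β := by
                congr 1
                rw [← ENNReal.ofReal_rpow_of_nonneg Metric.diam_nonneg hβ0.le]
                congr 1
                rw [Metric.diam, ENNReal.ofReal_toReal (ne_top_of_le_ne_top ENNReal.one_ne_top hs)]
                rfl
        calc ν s = (ENNReal.ofReal C)⁻¹ * μ s := by rw [hν, Measure.smul_apply, smul_eq_mul]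
          _ ≤ (ENNReal.ofReal C)⁻¹ * (ENNReal.ofReal C * EMetric.diam s ^ β) :=
              mul_le_mul_right hfinal _
          _ = EMetric.diam s ^ β := by
              rw [← mul_assoc, ENNReal.inv_mul_cancel hC0 hCfin, one_mul]
    have hμA : 0 < μ A := by
      have huniv : μ Set.univ ≠ 0 := fun h => hne (Measure.measure_univ_eq_zero.1 h)
      have hch : μ Set.univ ≤ μ A := by
        calc μ Set.univ = μ (A ∪ Aᶜ) := by rw [Set.union_compl_self]
          _ ≤ μ A + μ Aᶜ := measure_union_le _ _
          _ = μ A := by rw [hAc, add_zero]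
      exact lt_of_lt_of_le (pos_iff_ne_zero.2 huniv) hch
    have hνA : 0 < ν A := by
      rw [hν, Measure.smul_apply, smul_eq_mul]
      exact ENNReal.mul_pos (ENNReal.inv_ne_zero.2 hCfin) hμA.ne'
    exact lt_of_lt_of_le hνA (Measure.le_iff'.1 hνle A)
end
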